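/- For δ > 0, c > 0, σ > 0, the function u ↦ Ψ((√2/σ)√(δu² + 2cu)) satisfies Ψ((√2/σ)√(δu² + 2cu)) ~ Ψ((√2(δu + c))/(σ√δ)) as u → ∞, where Ψ is the standard normal survival function. -/

import Mathlib

open Filter MeasureTheory

/-- The standard normal survival function `Ψ(x) = ∫_x^∞ (2π)^{−1/2} e^{−v²/2} dv`. -/
noncomputable def stdNormalSurvival (x : ℝ) : ℝ :=
  ∫ v in Set.Ici x, Real.exp (-v ^ 2 / 2) / Real.sqrt (2 * Real.pi)

/-!
Since `-e^{-v²/2}/v` has derivative `(1 + v⁻²) e^{-v²/2}`, integrating over `(x, ∞)` sandwiches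
the Gaussian tail: `Ψ(x) ≤ φ(x)/x ≤ (1 + x⁻²) Ψ(x)`, so `Ψ(x) ~ φ(x)/x` (Mills' ratio).
Hence whenever `a, b → ∞` with `(b² - a²)/2 → k`, we get `b/a → 1` and
`Ψ(a)/Ψ(b) ~ (b/a) e^{(b² - a²)/2} → e^k`. For the two arguments of the theorem,
`(b² - a²)/2 = c²/(σ²δ)` identically.
-/

open Set Asymptotics Real Topology

noncomputable def gaussianTailApprox (x : ℝ) : ℝ := exp (-x ^ 2 / 2) / x / √(2 * π)

lemma tendsto_exp_neg_sq_div_two_atTop : Tendsto (fun x : ℝ => exp (-x ^ 2 / 2)) atTop (𝓝 0) :=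
  tendsto_exp_atBot.comp <|
    (tendsto_neg_atTop_atBot.comp (tendsto_pow_atTop two_ne_zero)).atBot_div_const two_pos

lemma hasDerivAt_exp_neg_sq_div_two (x : ℝ) :
    HasDerivAt (fun v => exp (-v ^ 2 / 2)) (-x * exp (-x ^ 2 / 2)) x := by
  convert ((hasDerivAt_pow 2 x).fun_neg.div_const 2).exp using 1
  ring

lemma hasDerivAt_neg_exp_neg_sq_div {x : ℝ} (hx : x ≠ 0) :
    HasDerivAt (fun v => -exp (-v ^ 2 / 2) / v) ((1 + (x ^ 2)⁻¹) * exp (-x ^ 2 / 2)) x := by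
  refine ((hasDerivAt_exp_neg_sq_div_two x).fun_neg.fun_div (hasDerivAt_id' x) hx).congr_deriv ?_
  field_simp
  ring

lemma integrableOn_Ioi_exp_neg_sq_div_two (x : ℝ) :
    IntegrableOn (fun v => exp (-v ^ 2 / 2)) (Ioi x) := by
  simpa [neg_div, div_eq_inv_mul] using
    (integrable_exp_neg_mul_sq (b := 2⁻¹) (by norm_num)).integrableOn

lemma tendsto_neg_exp_neg_sq_div_atTop : Tendsto (fun v => -exp (-v ^ 2 / 2) / v)
    atTop (𝓝 0) := by
  simpa [neg_div] using (tendsto_exp_neg_sq_div_two_atTop.div_atTop tendsto_id).neg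

section GaussianTail

variable {x : ℝ}

lemma integrableOn_Ioi_one_add_inv_sq_mul_exp_neg_sq (hx : 0 < x) :
    IntegrableOn (fun v => (1 + (v ^ 2)⁻¹) * exp (-v ^ 2 / 2)) (Ioi x) :=
  integrableOn_Ioi_deriv_of_nonneg' (fun v hv => hasDerivAt_neg_exp_neg_sq_div (hx.trans_le hv).ne')
    (fun v _ => by positivity) tendsto_neg_exp_neg_sq_div_atTop

lemma integral_Ioi_one_add_inv_sq_mul_exp_neg_sq (hx : 0 < x) :
    ∫ v in Ioi x, (1 + (v ^ 2)⁻¹) * exp (-v ^ 2 / 2) = exp (-x ^ 2 / 2) / x := by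
  rw [integral_Ioi_of_hasDerivAt_of_nonneg'
    (fun v hv => hasDerivAt_neg_exp_neg_sq_div (hx.trans_le hv).ne') (fun v _ => by positivity)
    tendsto_neg_exp_neg_sq_div_atTop]
  ring

lemma integral_Ioi_exp_neg_sq_le (hx : 0 < x) :
    ∫ v in Ioi x, exp (-v ^ 2 / 2) ≤ exp (-x ^ 2 / 2) / x := by
  rw [← integral_Ioi_one_add_inv_sq_mul_exp_neg_sq hx]
  refine setIntegral_mono_on (integrableOn_Ioi_exp_neg_sq_div_two x)
    (integrableOn_Ioi_one_add_inv_sq_mul_exp_neg_sq hx) measurableSet_Ioi fun v _ => ?_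
  nlinarith [exp_pos (-v ^ 2 / 2), inv_nonneg.2 (sq_nonneg v)]

lemma exp_neg_sq_div_le_integral_Ioi (hx : 0 < x) :
    exp (-x ^ 2 / 2) / x ≤ (1 + (x ^ 2)⁻¹) * ∫ v in Ioi x, exp (-v ^ 2 / 2) := by
  rw [← integral_Ioi_one_add_inv_sq_mul_exp_neg_sq hx, ← integral_const_mul]
  refine setIntegral_mono_on (integrableOn_Ioi_one_add_inv_sq_mul_exp_neg_sq hx)
    ((integrableOn_Ioi_exp_neg_sq_div_two x).const_mul _) measurableSet_Ioi fun v hv => ?_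
  have : (v ^ 2)⁻¹ ≤ (x ^ 2)⁻¹ := by gcongr; exact hv.le
  gcongr

end GaussianTail

lemma stdNormalSurvival_div_gaussianTailApprox (x : ℝ) :
    stdNormalSurvival x / gaussianTailApprox x =
      (∫ v in Ioi x, exp (-v ^ 2 / 2)) / (exp (-x ^ 2 / 2) / x) := by
  rw [stdNormalSurvival, integral_Ici_eq_integral_Ioi, integral_div, gaussianTailApprox,
    div_div_div_cancel_right₀ (by positivity)]

lemma stdNormalSurvival_isEquivalent_gaussianTailApprox :
    stdNormalSurvival ~[atTop] gaussianTailApprox := by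
  refine isEquivalent_of_tendsto_one ?_
  have hlower : Tendsto (fun x : ℝ => (1 + (x ^ 2)⁻¹)⁻¹) atTop (𝓝 1) := by
    simpa using
      ((tendsto_pow_atTop (α := ℝ) two_ne_zero).inv_tendsto_atTop.const_add 1).inv₀
        (by norm_num)
  refine tendsto_of_tendsto_of_tendsto_of_le_of_le' hlower tendsto_const_nhds ?_ ?_ <;>
    filter_upwards [eventually_gt_atTop 0] with x hx <;>
    rw [Pi.div_apply, stdNormalSurvival_div_gaussianTailApprox]
  · rw [inv_le_iff_one_le_mul₀' (by positivity), ← mul_div_assoc, one_le_div (by positivity)]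
    exact exp_neg_sq_div_le_integral_Ioi hx
  · exact div_le_one_of_le₀ (integral_Ioi_exp_neg_sq_le hx) (by positivity)

lemma tendsto_div_of_tendsto_sq_sub_sq {α : Type*} {l : Filter α} {a b : α → ℝ} {L : ℝ}
    (ha : Tendsto a l atTop) (hb : Tendsto b l atTop)
    (hab : Tendsto (fun t => b t ^ 2 - a t ^ 2) l (𝓝 L)) :
    Tendsto (fun t => b t / a t) l (𝓝 1) := by
  -- `b/a - 1 = (b² - a²) / (a (a + b))`
  have hden : Tendsto (fun t => a t * (a t + b t)) l atTop :=
    ha.atTop_mul_atTop₀ (ha.atTop_add_atTop hb)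
  have := (hab.div_atTop hden).const_add 1
  rw [add_zero] at this
  refine this.congr' ?_
  filter_upwards [ha.eventually_gt_atTop 0, hb.eventually_gt_atTop 0] with t hat hbt
  field_simp
  ring

lemma gaussianTailApprox_div_gaussianTailApprox {x y : ℝ} (hx : x ≠ 0) (hy : y ≠ 0) :
    gaussianTailApprox x / gaussianTailApprox y = y / x * exp ((y ^ 2 - x ^ 2) / 2) := by
  have : exp ((y ^ 2 - x ^ 2) / 2) = exp (-x ^ 2 / 2) / exp (-y ^ 2 / 2) := by
    rw [← exp_sub]; ring_nf
  rw [this, gaussianTailApprox, gaussianTailApprox]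
  field_simp

theorem tendsto_stdNormalSurvival_comp_div_comp {α : Type*} {l : Filter α} {a b : α → ℝ}
    {k : ℝ}
    (ha : Tendsto a l atTop) (hb : Tendsto b l atTop)
    (hab : Tendsto (fun t => (b t ^ 2 - a t ^ 2) / 2) l (𝓝 k)) :
    Tendsto (fun t => stdNormalSurvival (a t) / stdNormalSurvival (b t)) l (𝓝 (exp k)) := by
  have hequiv := (stdNormalSurvival_isEquivalent_gaussianTailApprox.comp_tendsto ha).div
    (stdNormalSurvival_isEquivalent_gaussianTailApprox.comp_tendsto hb)
  refine hequiv.symm.tendsto_nhds ?_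
  have hratio := tendsto_div_of_tendsto_sq_sub_sq ha hb
    ((hab.const_mul 2).congr fun t => mul_div_cancel₀ _ two_ne_zero)
  refine (one_mul (exp k) ▸ hratio.mul ((continuous_exp.tendsto k).comp hab)).congr' ?_
  filter_upwards [ha.eventually_gt_atTop 0, hb.eventually_gt_atTop 0] with t hat hbt
  simp [gaussianTailApprox_div_gaussianTailApprox hat.ne' hbt.ne']

theorem survival_ratio_limit_general (δ c σ : ℝ) (hδ : 0 < δ) (hσ : 0 < σ) :
    Tendsto
      (fun u : ℝ =>
        stdNormalSurvival (Real.sqrt 2 / σ * Real.sqrt (δ * u ^ 2 + 2 * c * u)) /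
          stdNormalSurvival (Real.sqrt 2 * (δ * u + c) / (σ * Real.sqrt δ)))
      atTop (nhds (Real.exp (c ^ 2 / (σ ^ 2 * δ)))) := by
  have hquad : Tendsto (fun u : ℝ => δ * u ^ 2 + 2 * c * u) atTop atTop := by
    refine (tendsto_id.atTop_mul_atTop₀
      (tendsto_atTop_add_const_right _ (2 * c) (tendsto_id.const_mul_atTop hδ))).congr fun u => ?_
    simp only [id]; ring
  have hlin : Tendsto (fun u : ℝ => δ * u + c) atTop atTop :=
    tendsto_atTop_add_const_right _ c (tendsto_id.const_mul_atTop hδ)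
  refine tendsto_stdNormalSurvival_comp_div_comp
    ((tendsto_sqrt_atTop.comp hquad).const_mul_atTop (by positivity))
    ((hlin.const_mul_atTop (by positivity)).atTop_div_const (by positivity))
    (tendsto_const_nhds.congr' ?_)
  filter_upwards [hquad.eventually_ge_atTop 0] with u hu
  rw [mul_pow, div_pow, mul_pow, mul_pow, div_pow, sq_sqrt hu, sq_sqrt zero_le_two, sq_sqrt hδ.le]
  field_simp
  ring

/-- For `δ, c, σ > 0`,
`Ψ((√2/σ)√(δu² + 2cu)) ~ Ψ((√2(δu + c))/(σ√δ))` as `u → ∞`, up to the explicit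
constant factor: the ratio tends to `e^{c²/(σ²δ)}`. -/
theorem survival_ratio_limit (δ c σ : ℝ) (hδ : 0 < δ) (hc : 0 < c) (hσ : 0 < σ) :
    Tendsto
      (fun u : ℝ =>
        stdNormalSurvival (Real.sqrt 2 / σ * Real.sqrt (δ * u ^ 2 + 2 * c * u)) /
          stdNormalSurvival (Real.sqrt 2 * (δ * u + c) / (σ * Real.sqrt δ)))
      atTop (nhds (Real.exp (c ^ 2 / (σ ^ 2 * δ)))) :=
  survival_ratio_limit_general δ c σ hδ hσ
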